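/- For every integer L ≥ 0, the moment m_L satisfies m_L = 1/(L+1) − 2·Σ_{n=1}^{∞} d_n · Σ_{v=1}^{⌊L/2⌋} (−1)^v · L! / ((L−2v+1)! · (2πn)^{2v}), where the outer series over n converges absolutely (for L ≤ 1 the inner sum is empty and the identity reads m_L = 1/(L+1)). -/

import Mathlib

/-!
By `∑ₖ C(L+1,k) Bₖ(x) = (L+1) x^L` and the reflection `Bₖ(1-x) = (-1)^k Bₖ(x)`, the symmetrised
power `(x^L + (1-x)^L)/2` is `1/(L+1)` plus a combination of the even Bernoulli polynomials
`B₂ᵥ`, whose Fourier cosine series on `[0,1]` are classical. This expands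
`(1/(L+1) - (x^L + (1-x)^L)/2)/2` as the absolutely convergent series `∑ₙ cosCoeff L n · cos(2πnx)`.
Integrating term by term against `μ`, which is invariant under `x ↦ 1 - x` because
`Q(x) = 1 - Q(1-x)` and `μ` has no atoms, gives `(1/(L+1) - m_L)/2 = ∑ₙ cosCoeff L n · d_n`.
-/

open MeasureTheory Real Set Filter Topology

theorem Finset.sum_range_one_add_neg_one_pow_mul {R : Type*} [CommRing R] (f : ℕ → R) (N : ℕ) :
    ∑ k ∈ Finset.range N, (1 + (-1) ^ k) * f k =
      2 * ∑ v ∈ Finset.range ((N + 1) / 2), f (2 * v) := by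
  induction N using Nat.twoStepInduction with
  | zero => simp
  | one => norm_num [one_add_one_eq_two]
  | more n ih _ =>
    rw [Finset.sum_range_succ, Finset.sum_range_succ, ih,
      show (n + 2 + 1) / 2 = (n + 1) / 2 + 1 by omega, Finset.sum_range_succ]
    rcases Nat.even_or_odd n with ⟨j, rfl⟩ | ⟨j, rfl⟩
    · rw [show (j + j + 1) / 2 = j by omega, Even.neg_one_pow ⟨j, rfl⟩,
        Odd.neg_one_pow ⟨j, by ring⟩, two_mul j]
      ring
    · rw [show (2 * j + 1 + 1) / 2 = j + 1 by omega, Odd.neg_one_pow ⟨j, rfl⟩,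
        Even.neg_one_pow ⟨j + 1, by ring⟩, show 2 * (j + 1) = 2 * j + 1 + 1 by ring]
      ring

theorem sum_choose_mul_bernoulliFun (L : ℕ) (x : ℝ) :
    ∑ k ∈ Finset.range (L + 1), ((L + 1).choose k : ℝ) * bernoulliFun k x = (L + 1) * x ^ L := by
  have h := congr_arg (fun p => (p.map (algebraMap ℚ ℝ)).eval x) (Polynomial.sum_bernoulli L)
  simp only [Polynomial.map_sum, Polynomial.eval_finsetSum, Polynomial.map_monomial,
    Polynomial.eval_monomial, Polynomial.map_smul, Polynomial.eval_smul, smul_eq_mul, eq_ratCast,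
    Rat.cast_natCast, Rat.cast_add, Rat.cast_one] at h
  exact h

theorem cast_choose_succ_div_succ {L k : ℕ} (hk : k ≤ L) :
    ((L + 1).choose k : ℝ) / (L + 1) = L.factorial / ((L - k + 1).factorial * k.factorial) := by
  rw [Nat.cast_choose ℝ (by omega), show L + 1 - k = L - k + 1 by omega, Nat.factorial_succ]
  push_cast
  field_simp

theorem pow_add_one_sub_pow_div_two_eq_sum_bernoulliFun (L : ℕ) (x : ℝ) :
    (x ^ L + (1 - x) ^ L) / 2 = 1 / (L + 1) + ∑ v ∈ Finset.Icc 1 (L / 2),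
      L.factorial / ((L - 2 * v + 1).factorial * (2 * v).factorial) * bernoulliFun (2 * v) x := by
  have hL : (L : ℝ) + 1 ≠ 0 := by positivity
  have hsum : (L + 1) * (x ^ L + (1 - x) ^ L) = ∑ k ∈ Finset.range (L + 1),
      (1 + (-1) ^ k) * (((L + 1).choose k : ℝ) * bernoulliFun k x) := by
    rw [mul_add, ← sum_choose_mul_bernoulliFun, ← sum_choose_mul_bernoulliFun,
      ← Finset.sum_add_distrib]
    refine Finset.sum_congr rfl fun k _ => ?_
    rw [bernoulliFun_eval_one_sub]
    ring
  rw [Finset.sum_range_one_add_neg_one_pow_mul, show (L + 1 + 1) / 2 = L / 2 + 1 by omega,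
    Finset.range_eq_Ico, Finset.sum_eq_sum_Ico_succ_bot (by omega),
    Finset.Ico_add_one_right_eq_Icc] at hsum
  have hcoeff : ∀ v ∈ Finset.Icc 1 (L / 2),
      ((L + 1).choose (2 * v) : ℝ) * bernoulliFun (2 * v) x =
        (L + 1) * (L.factorial / ((L - 2 * v + 1).factorial * (2 * v).factorial) *
          bernoulliFun (2 * v) x) := by
    intro v hv
    rw [← cast_choose_succ_div_succ (by rw [Finset.mem_Icc] at hv; omega)]
    field_simp
  rw [Finset.sum_congr rfl hcoeff, ← Finset.mul_sum] at hsum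
  simp only [mul_zero, Nat.choose_zero_right, Nat.cast_one, bernoulliFun_zero] at hsum
  generalize (∑ v ∈ Finset.Icc 1 (L / 2), _ : ℝ) = S at hsum ⊢
  field_simp
  linear_combination hsum

noncomputable def cosCoeff (L : ℕ) (t : ℝ) : ℝ :=
  ∑ v ∈ Finset.Icc 1 (L / 2), (-1 : ℝ) ^ v * (L.factorial : ℝ) /
    (((L - 2 * v + 1).factorial : ℝ) * (2 * π * t) ^ (2 * v))

theorem cosCoeff_zero (L : ℕ) : cosCoeff L 0 = 0 :=
  Finset.sum_eq_zero fun v hv => by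
    rw [mul_zero, zero_pow (by rw [Finset.mem_Icc] at hv; omega), mul_zero, div_zero]

theorem summable_cosCoeff (L : ℕ) : Summable fun n : ℕ => cosCoeff L n := by
  refine summable_sum fun v hv => ?_
  have hv : 1 < 2 * v := by rw [Finset.mem_Icc] at hv; omega
  refine ((Real.summable_one_div_nat_pow.2 hv).mul_left
    ((-1) ^ v * L.factorial / ((L - 2 * v + 1).factorial * (2 * π) ^ (2 * v)))).congr fun n => ?_
  simp only [mul_pow, div_eq_mul_inv, mul_inv]
  ring

theorem hasSum_cosCoeff_mul_cos (L : ℕ) {x : ℝ} (hx : x ∈ Icc (0 : ℝ) 1) :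
    HasSum (fun n : ℕ => cosCoeff L n * cos (2 * π * n * x))
      ((1 / (L + 1) - (x ^ L + (1 - x) ^ L) / 2) / 2) := by
  have hterm : ∀ v ∈ Finset.Icc 1 (L / 2), HasSum (fun n : ℕ => (-1 : ℝ) ^ v * L.factorial /
        ((L - 2 * v + 1).factorial * (2 * π * n) ^ (2 * v)) * cos (2 * π * n * x))
      (-(L.factorial / ((L - 2 * v + 1).factorial * (2 * v).factorial) *
        bernoulliFun (2 * v) x) / 2) := by
    intro v hv
    set c : ℝ := (-1) ^ v * L.factorial / ((L - 2 * v + 1).factorial * (2 * π) ^ (2 * v))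
    have h : HasSum (fun n : ℕ => c * (1 / (n : ℝ) ^ (2 * v) * cos (2 * π * n * x)))
        (c * ((-1) ^ (v + 1) * (2 * π) ^ (2 * v) / 2 / (2 * v).factorial *
          bernoulliFun (2 * v) x)) :=
      (hasSum_one_div_nat_pow_mul_cos (by rw [Finset.mem_Icc] at hv; omega) hx).mul_left c
    have hsign : (-1 : ℝ) ^ v * (-1) ^ (v + 1) = -1 := by
      rw [← pow_add]; exact Odd.neg_one_pow ⟨v, by ring⟩
    convert h using 1
    · ext n
      simp only [c, mul_pow, div_eq_mul_inv, mul_inv]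
      ring
    · simp only [c]
      field_simp
      linear_combination -bernoulliFun (2 * v) x * hsign
  convert hasSum_sum hterm using 1
  · ext n
    simp only [cosCoeff, Finset.sum_mul]
  · rw [pow_add_one_sub_pow_div_two_eq_sum_bernoulliFun, ← Finset.sum_div, Finset.sum_neg_distrib]
    ring

theorem hasSum_mul_integral_of_abs_le_one {α : Type*} [MeasurableSpace α] {μ : Measure α}
    [IsFiniteMeasure μ] {a : ℕ → ℝ} {g : ℕ → α → ℝ} {f : α → ℝ} (ha : Summable a)
    (hg : ∀ n, AEStronglyMeasurable (g n) μ) (hg_le : ∀ n x, |g n x| ≤ 1)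
    (hf : ∀ᵐ x ∂μ, HasSum (fun n => a n * g n x) (f x)) :
    HasSum (fun n => a n * ∫ x, g n x ∂μ) (∫ x, f x ∂μ) := by
  simp_rw [← integral_const_mul]
  refine hasSum_integral_of_dominated_convergence (fun n _ => |a n|)
    (fun n => (hg n).const_mul _) (fun n => ae_of_all _ fun x => ?_) (ae_of_all _ fun _ => ha.abs)
    (integrable_const _) hf
  rw [norm_mul, Real.norm_eq_abs, Real.norm_eq_abs]
  exact mul_le_of_le_one_right (abs_nonneg _) (hg_le n x)

section DistributionFunction

variable {Q : ℝ → ℝ} {μ : Measure ℝ}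

theorem nullSingletonClass_of_continuousOn [IsProbabilityMeasure μ]
    (hQcont : ContinuousOn Q (Icc 0 1)) (hQ0 : Q 0 = 0) (hQ1 : Q 1 = 1)
    (hμ : ∀ a b : ℝ, 0 ≤ a → a ≤ b → b ≤ 1 → μ (Ioc a b) = ENNReal.ofReal (Q b - Q a)) :
    NullSingletonClass μ := by
  refine ⟨fun x => ?_⟩
  by_cases hx : x ∈ Ioc (0 : ℝ) 1
  · have hle : 𝓝[<] x ≤ 𝓝[Icc 0 1] x := nhdsWithin_le_of_mem <|
      mem_of_superset (Ioo_mem_nhdsLT hx.1) fun y hy => ⟨hy.1.le, hy.2.le.trans hx.2⟩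
    have hQx : Tendsto (fun a => ENNReal.ofReal (Q x - Q a)) (𝓝[<] x) (𝓝 0) := by
      simpa using ENNReal.tendsto_ofReal
        ((((hQcont x (Ioc_subset_Icc_self hx)).tendsto).mono_left hle).const_sub (Q x))
    refine le_bot_iff.1 (ge_of_tendsto hQx ?_)
    filter_upwards [Ioo_mem_nhdsLT hx.1] with a ha
    rw [← hμ a x ha.1.le ha.2.le hx.2]
    exact measure_mono (singleton_subset_iff.2 ⟨ha.2, le_rfl⟩)
  · have hIoc : μ (Ioc 0 1)ᶜ = 0 := by
      rw [prob_compl_eq_zero_iff measurableSet_Ioc, hμ 0 1 le_rfl zero_le_one le_rfl, hQ0, hQ1,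
        sub_zero, ENNReal.ofReal_one]
    exact measure_mono_null (singleton_subset_iff.2 hx) hIoc

theorem map_one_sub_eq_self [IsFiniteMeasure μ] [NullSingletonClass μ] (hQ0 : Q 0 = 0)
    (hQ1 : Q 1 = 1) (hQsymm : ∀ x ∈ Icc (0 : ℝ) 1, Q x = 1 - Q (1 - x))
    (hμ : ∀ a b : ℝ, 0 ≤ a → a ≤ b → b ≤ 1 → μ (Ioc a b) = ENNReal.ofReal (Q b - Q a))
    (hμsupp : μ (Icc (0 : ℝ) 1)ᶜ = 0) :
    μ.map (fun x => 1 - x) = μ := by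
  refine Measure.ext_of_Iic _ _ fun t => ?_
  rw [Measure.map_apply (by fun_prop) measurableSet_Iic, ← measure_inter_conull hμsupp,
    ← measure_inter_conull (s := Iic t) hμsupp]
  have hreflect : (fun x => 1 - x) ⁻¹' Iic t ∩ Icc 0 1 = Icc (1 - min t 1) 1 := by
    ext y
    simp only [mem_inter_iff, mem_preimage, mem_Iic, mem_Icc]
    grind
  have hIic : Iic t ∩ Icc 0 1 = Icc 0 (min t 1) := by
    ext y
    simp only [mem_inter_iff, mem_Iic, mem_Icc, le_min_iff]
    tauto
  rw [hreflect, hIic]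
  rcases lt_or_ge (min t 1) 0 with hs | hs
  · rw [Icc_eq_empty (by linarith), Icc_eq_empty (by linarith)]
  · have hs1 : min t 1 ≤ 1 := min_le_right t 1
    rw [← measure_congr Ioc_ae_eq_Icc, ← measure_congr Ioc_ae_eq_Icc,
      hμ _ _ (by linarith) (by linarith) le_rfl, hμ _ _ le_rfl hs hs1, hQsymm _ ⟨hs, hs1⟩, hQ0,
      hQ1]
    ring_nf

end DistributionFunction

theorem hasSum_cosCoeff_mul_integral_cos {μ : Measure ℝ} [IsProbabilityMeasure μ]
    (hsymm : μ.map (fun x => 1 - x) = μ) (hsupp : ∀ᵐ x ∂μ, x ∈ Icc (0 : ℝ) 1) (L : ℕ) :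
    HasSum (fun n : ℕ => cosCoeff L n * ∫ x, cos (2 * π * n * x) ∂μ)
      ((1 / (L + 1) - ∫ x, x ^ L ∂μ) / 2) := by
  have hint : ∀ f : ℝ → ℝ, Continuous f → Integrable f μ := fun f hf =>
    Measure.restrict_eq_self_of_ae_mem hsupp ▸ hf.integrableOn_Icc
  have hpow : Integrable (fun x : ℝ => x ^ L) μ := hint _ (continuous_pow L)
  have hpow' : Integrable (fun x : ℝ => (1 - x) ^ L) μ := hint _ (by fun_prop)
  have hreflect : ∫ x, (1 - x) ^ L ∂μ = ∫ x, x ^ L ∂μ := by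
    conv_rhs => rw [← hsymm]
    exact (integral_map (by fun_prop) (continuous_pow L).aestronglyMeasurable).symm
  have hmoment : ∫ x, (1 / (L + 1) - (x ^ L + (1 - x) ^ L) / 2) / 2 ∂μ =
      (1 / (L + 1) - ∫ x, x ^ L ∂μ) / 2 := by
    have hsym : Integrable (fun x : ℝ => (x ^ L + (1 - x) ^ L) / 2) μ :=
      (hpow.add hpow').div_const 2
    rw [integral_div, integral_sub (integrable_const _) hsym, integral_div, integral_div,
      integral_add hpow hpow', hreflect, integral_const, probReal_univ, one_smul]
    ring
  rw [← hmoment]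
  exact hasSum_mul_integral_of_abs_le_one (summable_cosCoeff L) (fun n => by fun_prop)
    (fun n x => abs_cos_le_one _) (hsupp.mono fun x hx => hasSum_cosCoeff_mul_cos L hx)

theorem stmt_4_general
    (Q : ℝ → ℝ) (μ : Measure ℝ) [IsProbabilityMeasure μ]
    (hQcont : ContinuousOn Q (Icc 0 1))
    (hQ0 : Q 0 = 0) (hQ1 : Q 1 = 1)
    (hQsymm : ∀ x ∈ Icc (0:ℝ) 1, Q x = 1 - Q (1 - x))
    (hμ : ∀ a b : ℝ, 0 ≤ a → a ≤ b → b ≤ 1 →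
      μ (Ioc a b) = ENNReal.ofReal (Q b - Q a))
    (hμsupp : μ (Icc (0:ℝ) 1)ᶜ = 0)
    (d : ℕ → ℝ)
    (hd : ∀ n : ℕ, d n = ∫ x in Icc (0:ℝ) 1, Real.cos (2 * π * n * x) ∂μ)
    (m : ℕ → ℝ)
    (hm : ∀ L : ℕ, m L = ∫ x in Icc (0:ℝ) 1, x ^ L ∂μ)
:
    ∀ L : ℕ,
      Summable (fun n : ℕ => d (n + 1) *
        ∑ v ∈ Finset.Icc 1 (L / 2), (-1 : ℝ) ^ v * (L.factorial : ℝ) /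
          (((L - 2 * v + 1).factorial : ℝ) * (2 * π * ((n : ℝ) + 1)) ^ (2 * v))) ∧
      m L = 1 / ((L : ℝ) + 1) - 2 * ∑' n : ℕ, d (n + 1) *
        ∑ v ∈ Finset.Icc 1 (L / 2), (-1 : ℝ) ^ v * (L.factorial : ℝ) /
          (((L - 2 * v + 1).factorial : ℝ) * (2 * π * ((n : ℝ) + 1)) ^ (2 * v)) := by
  intro L
  have hsupp : ∀ᵐ x ∂μ, x ∈ Icc (0 : ℝ) 1 := mem_ae_iff.2 hμsupp
  have := nullSingletonClass_of_continuousOn hQcont hQ0 hQ1 hμ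
  have hsum := hasSum_cosCoeff_mul_integral_cos (map_one_sub_eq_self hQ0 hQ1 hQsymm hμ hμsupp)
    hsupp L
  simp only [Measure.restrict_eq_self_of_ae_mem hsupp] at hd hm
  rw [← hm, ← hasSum_nat_add_iff' 1] at hsum
  have hshift :
      HasSum (fun n : ℕ => d (n + 1) * cosCoeff L (n + 1)) ((1 / (L + 1) - m L) / 2) := by
    simpa [hd, cosCoeff_zero, mul_comm] using hsum
  refine ⟨hshift.summable, ?_⟩
  change m L = _ - 2 * ∑' n : ℕ, d (n + 1) * cosCoeff L (n + 1)
  rw [hshift.tsum_eq]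
  ring

theorem stmt_4
    (Q : ℝ → ℝ) (μ : Measure ℝ) [IsProbabilityMeasure μ]
    (hQcont : ContinuousOn Q (Icc 0 1))
    (hQmono : StrictMonoOn Q (Icc 0 1))
    (hQ0 : Q 0 = 0) (hQ1 : Q 1 = 1)
    (hQsymm : ∀ x ∈ Icc (0:ℝ) 1, Q x = 1 - Q (1 - x))
    (hQfun : ∀ x ∈ Icc (0:ℝ) 1, Q x = 2 * Q (x / (x + 1)))
    (hμ : ∀ a b : ℝ, 0 ≤ a → a ≤ b → b ≤ 1 →
      μ (Ioc a b) = ENNReal.ofReal (Q b - Q a))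
    (hμsupp : μ (Icc (0:ℝ) 1)ᶜ = 0)
    (d : ℕ → ℝ)
    (hd : ∀ n : ℕ, d n = ∫ x in Icc (0:ℝ) 1, Real.cos (2 * π * n * x) ∂μ)
    (m : ℕ → ℝ)
    (hm : ∀ L : ℕ, m L = ∫ x in Icc (0:ℝ) 1, x ^ L ∂μ)
:
    ∀ L : ℕ,
      Summable (fun n : ℕ => d (n + 1) *
        ∑ v ∈ Finset.Icc 1 (L / 2), (-1 : ℝ) ^ v * (L.factorial : ℝ) /
          (((L - 2 * v + 1).factorial : ℝ) * (2 * π * ((n : ℝ) + 1)) ^ (2 * v))) ∧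
      m L = 1 / ((L : ℝ) + 1) - 2 * ∑' n : ℕ, d (n + 1) *
        ∑ v ∈ Finset.Icc 1 (L / 2), (-1 : ℝ) ^ v * (L.factorial : ℝ) /
          (((L - 2 * v + 1).factorial : ℝ) * (2 * π * ((n : ℝ) + 1)) ^ (2 * v)) :=
  stmt_4_general Q μ hQcont hQ0 hQ1 hQsymm hμ hμsupp d hd m hm
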